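/- arXiv:2102.01440 — 4 statements merged into one kernel-verified Lean document; each statement's English description precedes it below -/
import Mathlib

section
/- Let J = (V, D, H) be a weakly winning justification for a parity game PG. Then every finite path in D starting in a node v and ending in an unjustified node is a play of the parametrized parity game PG_{P_J} won by H(v). -/
attribute [local instance] Classical.propDecidable

noncomputable section

open Fin.NatCast

/-- A parity game: an edge relation `E`, an owner function, a priority
function; every node has at least one outgoing edge. -/
structure ParityGame (V : Type*) where
  E : V → V → Prop
  owner : V → Fin 2
  pr : V → ℕ
  exists_succ : ∀ v, ∃ w, E v w

namespace ParityGame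

variable {V : Type*}

/-- An infinite sequence of nodes following the relation `R`. -/
def IsInfPath (R : V → V → Prop) (π : ℕ → V) : Prop :=
  ∀ i, R (π i) (π (i + 1))

/-- `ρ 0, …, ρ n` is a finite sequence of nodes following `R`. -/
def IsFinPath (R : V → V → Prop) (ρ : ℕ → V) (n : ℕ) : Prop :=
  ∀ i < n, R (ρ i) (ρ (i + 1))

/-- A cycle following `R`: a nonempty finite path ending in its starting node. -/
def IsCycle (R : V → V → Prop) (ρ : ℕ → V) (n : ℕ) : Prop :=
  0 < n ∧ IsFinPath R ρ n ∧ ρ n = ρ 0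

/-- `w` is reachable from `v` following `R` (in zero or more steps). -/
def Reaches (R : V → V → Prop) (v w : V) : Prop :=
  Relation.ReflTransGen R v w

/-- The infinite play `π` is won by player `α`: the highest priority
occurring infinitely often in the play has parity `α`. -/
def InfWonBy (G : ParityGame V) (π : ℕ → V) (α : Fin 2) : Prop :=
  ∃ p : ℕ, {i | G.pr (π i) = p}.Infinite ∧
    (∀ q : ℕ, {i | G.pr (π i) = q}.Infinite → q ≤ p) ∧ (p : Fin 2) = α

/-- A play is consistent with a (partial, memoryless) strategy given as a set
of edges: whenever the play is at a node where the strategy selects an edge,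
the play follows that edge. -/
def Consistent (σ : V → V → Prop) (π : ℕ → V) : Prop :=
  ∀ i u, σ (π i) u → π (i + 1) = u

/-- Consistency of a finite play `ρ 0, …, ρ n` with a strategy. -/
def ConsistentFin (σ : V → V → Prop) (ρ : ℕ → V) (n : ℕ) : Prop :=
  ∀ i < n, ∀ u, σ (ρ i) u → ρ (i + 1) = u

/-- The default hypothesis: each node is won by the parity of its priority. -/
def Hd (G : ParityGame V) (v : V) : Fin 2 := (G.pr v : Fin 2)

/-- `dj` is a direct justification for player `α` to win node `v`: a set
containing exactly one outgoing edge of `v` if `α` owns `v`, and all outgoing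
edges of `v` otherwise. -/
def IsDJ (G : ParityGame V) (v : V) (α : Fin 2) (dj : Set (V × V)) : Prop :=
  (G.owner v = α → ∃ w, G.E v w ∧ dj = {(v, w)}) ∧
  (G.owner v ≠ α → dj = {p | p.1 = v ∧ G.E v p.2})

/-- `dj` wins `v` for `α` under hypothesis `H`. -/
def WinsDJ (G : ParityGame V) (H : V → Fin 2) (v : V) (α : Fin 2)
    (dj : Set (V × V)) : Prop :=
  G.IsDJ v α dj ∧ ∀ p ∈ dj, H p.2 = α

/-- The parity game obtained from `G` and the parameter function `P` by
replacing, in every parameter `v`, the outgoing edges of `v` by the self-loop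
`(v, v)` and the priority of `v` by its assigned winner `P v`. -/
def paramGame (G : ParityGame V) (P : V → Option (Fin 2)) : ParityGame V where
  E := fun v w => if P v = none then G.E v w else w = v
  owner := G.owner
  pr := fun v => (P v).elim (G.pr v) Fin.val
  exists_succ := fun v => by
    by_cases h : P v = none
    · obtain ⟨w, hw⟩ := G.exists_succ v
      exact ⟨w, by simp [h, hw]⟩
    · exact ⟨v, by simp [h]⟩

/-- A justification for `G`: a subgraph `D` together with a hypothesis `H`. -/
structure Justification (G : ParityGame V) where
  D : V → V → Prop
  H : V → Fin 2

variable {G : ParityGame V}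

namespace Justification

/-- `v` is justified in `J`: it has an outgoing edge in `D`. -/
def Justified (J : Justification G) (v : V) : Prop := ∃ w, J.D v w

/-- The set of outgoing edges of `v` in `D`. -/
def outEdges (J : Justification G) (v : V) : Set (V × V) :=
  {p | p.1 = v ∧ J.D v p.2}

/-- `J` is weakly winning: the outgoing edges of every justified node `v`
form a direct justification winning `v` for `H v` under `H`. -/
def WeaklyWinning (J : Justification G) : Prop :=
  ∀ v, J.Justified v → G.WinsDJ J.H v (J.H v) (J.outEdges v)

/-- `J` is winning: weakly winning, and every infinite path in `D` is a play
of `G` won by the hypothetical winner of its nodes. -/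
def Winning (J : Justification G) : Prop :=
  J.WeaklyWinning ∧
    ∀ π : ℕ → V, IsInfPath J.D π → G.InfWonBy π (J.H (π 0))

/-- The parameter function `P_J`: the restriction of `H` to the unjustified
nodes of `J`. -/
def param (J : Justification G) (v : V) : Option (Fin 2) :=
  if J.Justified v then none else some (J.H v)

/-- The strategy `σ_{J,α}`: the set of edges `(v, w) ∈ D` with
`O v = H v = α`. -/
def strat (J : Justification G) (α : Fin 2) : V → V → Prop :=
  fun v w => J.D v w ∧ G.owner v = α ∧ J.H v = α

/-- `Par_J v`: the parameters (unjustified nodes) reachable from `v` in `D`. -/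
def Par (J : Justification G) (v : V) : Set V :=
  {w | Reaches J.D v w ∧ ¬ J.Justified w}

/-- The justification level of `v`: the minimal priority of a parameter
reachable from `v`, and `⊤` (`+∞`) if there is none. -/
def jl (J : Justification G) (v : V) : ℕ∞ :=
  sInf ((fun w => (G.pr w : ℕ∞)) '' J.Par v)

/-- The justification level of a direct justification: the minimum of the
justification levels of the targets of its edges. -/
def jlDJ (J : Justification G) (dj : Set (V × V)) : ℕ∞ :=
  sInf ((fun p : V × V => J.jl p.2) '' dj)

/-- `J` is safe: winning, unjustified nodes have their default winner as
hypothesis, and the justification level of every node is at least its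
priority. -/
def Safe (J : Justification G) : Prop :=
  J.Winning ∧ (∀ v, ¬ J.Justified v → J.H v = G.Hd v) ∧
    ∀ v, (G.pr v : ℕ∞) ≤ J.jl v

/-- `J[v : dj, α]`: replace the outgoing `D`-edges of `v` by `dj` and set
`H v := α`. -/
def update (J : Justification G) (v : V) (dj : Set (V × V)) (α : Fin 2) :
    Justification G where
  D := fun x y => if x = v then (x, y) ∈ dj else J.D x y
  H := fun x => if x = v then α else J.H x

/-- `J[v : ∅, Hf v | v ∈ S]`: remove the direct justification of every
`v ∈ S` and set `H v := Hf v`. -/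
def resetAll (J : Justification G) (S : Set V) (Hf : V → Fin 2) :
    Justification G where
  D := fun x y => if x ∈ S then False else J.D x y
  H := fun x => if x ∈ S then Hf x else J.H x

/-- `s_i(J)`: the number of justified nodes of justification level `i`. -/
def size (J : Justification G) (i : ℕ∞) : ℕ :=
  {v | J.Justified v ∧ J.jl v = i}.ncard

end Justification

/-- The preconditions of the operation `Justify(J, v, dj)`. -/
def Executable (G : ParityGame V) (J : Justification G) (v : V)
    (dj : Set (V × V)) : Prop :=
  J.Safe ∧ (∃ α, G.WinsDJ J.H v α dj) ∧
    (if J.Justified v then J.jl v < J.jlDJ dj else J.jl v ≤ J.jlDJ dj)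

/-- The operation `Justify(J, v, dj)`, where `α` is the player winning `v`
by `dj`: if `H v = α` this is `J[v : dj, α]`; otherwise all nodes reaching
`v` in `D` are reset to their default winner and then `v` gets `dj`. -/
def justify (G : ParityGame V) (J : Justification G) (v : V)
    (dj : Set (V × V)) (α : Fin 2) : Justification G :=
  if J.H v = α then J.update v dj α
  else (J.resetAll {w | Reaches J.D w v} G.Hd).update v dj α

/-- The empty justification `(V, ∅, H_d)`. -/
def Justification.empty (G : ParityGame V) : Justification G :=
  ⟨fun _ _ => False, G.Hd⟩

theorem IsFinPath.mono {R S : V → V → Prop} (hRS : ∀ v w, R v w → S v w) {ρ : ℕ → V}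
    {n : ℕ} (h : IsFinPath R ρ n) : IsFinPath S ρ n :=
  fun i hi => hRS _ _ (h i hi)

theorem IsFinPath.apply_eq_apply_zero {β : Type*} {R : V → V → Prop} {f : V → β}
    (hf : ∀ v w, R v w → f w = f v) {ρ : ℕ → V} {n : ℕ} (h : IsFinPath R ρ n) :
    ∀ i ≤ n, f (ρ i) = f (ρ 0)
  | 0, _ => rfl
  | i + 1, hi => (hf _ _ (h i hi)).trans (h.apply_eq_apply_zero hf i (Nat.le_of_succ_le hi))

theorem IsDJ.edge {v w : V} {α : Fin 2} {dj : Set (V × V)} (h : G.IsDJ v α dj)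
    (hw : (v, w) ∈ dj) : G.E v w := by
  by_cases hown : G.owner v = α
  · obtain ⟨u, hu, rfl⟩ := h.1 hown
    obtain rfl : w = u := (Prod.mk.inj hw).2
    exact hu
  · rw [h.2 hown] at hw
    exact hw.2

namespace Justification

variable {J : Justification G}

theorem param_eq_none_of_justified {v : V} (hv : J.Justified v) : J.param v = none := by
  simp [param, hv]

theorem param_eq_some_of_not_justified {v : V} (hv : ¬ J.Justified v) :
    J.param v = some (J.H v) := by
  simp [param, hv]

theorem WeaklyWinning.edge {v w : V} (hJ : J.WeaklyWinning) (hvw : J.D v w) : G.E v w :=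
  (hJ v ⟨w, hvw⟩).1.edge ⟨rfl, hvw⟩

theorem WeaklyWinning.H_eq {v w : V} (hJ : J.WeaklyWinning) (hvw : J.D v w) :
    J.H w = J.H v :=
  (hJ v ⟨w, hvw⟩).2 (v, w) ⟨rfl, hvw⟩

end Justification

theorem stmt_2_general {V : Type*} {G : ParityGame V}
    (J : Justification G) (hJ : J.WeaklyWinning) (ρ : ℕ → V) (n : ℕ)
    (hpath : IsFinPath J.D ρ n) (hlast : ¬ J.Justified (ρ n)) :
    IsFinPath G.E ρ n ∧ (∀ i < n, J.param (ρ i) = none) ∧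
      J.param (ρ n) = some (J.H (ρ 0)) := by
  refine ⟨hpath.mono fun _ _ hvw => hJ.edge hvw, fun i hi => ?_, ?_⟩
  · exact Justification.param_eq_none_of_justified ⟨ρ (i + 1), hpath i hi⟩
  · rw [Justification.param_eq_some_of_not_justified hlast,
      hpath.apply_eq_apply_zero (fun _ _ hvw => hJ.H_eq hvw) n le_rfl]

/-- for a weakly winning justification `J`, every finite path in
`D` starting in `v` and ending in an unjustified node is a play of the
parametrized parity game `PG_{P_J}` won by `H v`: it follows `E`, all its
nodes except the last are non-parameters, and it halts in a parameter whose
assigned winner is `H v`. -/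
theorem stmt_2 {V : Type*} [Fintype V] {G : ParityGame V}
    (J : Justification G) (hJ : J.WeaklyWinning) (ρ : ℕ → V) (n : ℕ)
    (hpath : IsFinPath J.D ρ n) (hlast : ¬ J.Justified (ρ n)) :
    IsFinPath G.E ρ n ∧ (∀ i < n, J.param (ρ i) = none) ∧
      J.param (ρ n) = some (J.H (ρ 0)) :=
  stmt_2_general J hJ ρ n hpath hlast

end ParityGame

end
end

section
/- Let J = (V, D, H) be a winning justification for a parity game PG. Then for every node v, every play of the parametrized parity game PG_{P_J} starting in v that is consistent with the strategy σ_{J,H(v)} is won by H(v). Consequently H is the winning function of PG_{P_J}: for every node v, player H(v) has a winning strategy for v in PG_{P_J}, namely σ_{J,H(v)}. -/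
attribute [local instance] Classical.propDecidable

noncomputable section

open Fin.NatCast

namespace ParityGame

variable {V : Type*}

variable {G : ParityGame V}

/-!
A play of `PG_{P_J}` moves only through justified nodes until it halts. Out of a justified node
`u`, any move consistent with `σ_{J,H u}` is an edge of `D` leading to a node with the same
hypothesis, because the outgoing `D`-edges of `u` form a winning direct justification for `H u`.
So a consistent infinite play is an infinite `D`-path, won by `H v` since `J` is winning, and a
consistent finite play halts at a parameter `w` with `P_J w = H w = H v`.
-/

namespace Justification

variable {J : Justification G}

lemma param_eq_none_iff {v : V} : J.param v = none ↔ J.Justified v := by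
  by_cases h : J.Justified v <;> simp [param, h]

lemma eq_H_of_param_eq_some {v : V} {β : Fin 2} (h : J.param v = some β) : β = J.H v := by
  by_cases hv : J.Justified v <;> simp_all [param]

/-- If `α` owns `u`, then `D` holds only the strategy's edge out of `u`; otherwise it holds all
edges of `G` out of `u`. -/
lemma WeaklyWinning.consistent_step (hW : J.WeaklyWinning) {u w : V} {α : Fin 2}
    (hu : J.Justified u) (hα : J.H u = α) (hE : G.E u w)
    (hcons : ∀ x, J.strat α u x → w = x) : J.D u w ∧ J.H w = α := by
  subst hα
  obtain ⟨⟨hown, hopp⟩, hwin⟩ := hW u hu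
  by_cases ho : G.owner u = J.H u
  · obtain ⟨w₀, -, hdj⟩ := hown ho
    obtain ⟨y, hy⟩ := hu
    have hyw₀ : (u, y) ∈ J.outEdges u := ⟨rfl, hy⟩
    rw [hdj, Set.mem_singleton_iff, Prod.mk.injEq] at hyw₀
    obtain rfl : w = y := hcons y ⟨hy, ho, rfl⟩
    exact ⟨hy, hwin (u, w) (by rw [hdj, hyw₀.2]; rfl)⟩
  · have hmem : (u, w) ∈ J.outEdges u := by
      rw [hopp ho]
      exact ⟨rfl, hE⟩
    exact ⟨hmem.2, hwin (u, w) hmem⟩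

section FinitePlay

variable {ρ : ℕ → V} {n : ℕ}

lemma WeaklyWinning.H_eq_of_consistentFin (hW : J.WeaklyWinning) (hpath : IsFinPath G.E ρ n)
    (hjust : ∀ i < n, J.Justified (ρ i)) (hcons : ConsistentFin (J.strat (J.H (ρ 0))) ρ n) :
    ∀ i ≤ n, J.H (ρ i) = J.H (ρ 0) := by
  intro i hi
  induction i with
  | zero => rfl
  | succ i ih =>
    exact (hW.consistent_step (hjust i hi) (ih (by omega)) (hpath i hi) (hcons i hi)).2

lemma WeaklyWinning.isFinPath_D_of_consistentFin (hW : J.WeaklyWinning)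
    (hpath : IsFinPath G.E ρ n) (hjust : ∀ i < n, J.Justified (ρ i))
    (hcons : ConsistentFin (J.strat (J.H (ρ 0))) ρ n) : IsFinPath J.D ρ n := fun i hi =>
  (hW.consistent_step (hjust i hi) (hW.H_eq_of_consistentFin hpath hjust hcons i hi.le)
    (hpath i hi) (hcons i hi)).1

end FinitePlay

end Justification

theorem stmt_5_general {V : Type*} {G : ParityGame V}
    (J : Justification G) (hJ : J.Winning) (v : V) :
    (∀ π : ℕ → V, π 0 = v → IsInfPath G.E π → (∀ i, J.param (π i) = none) →
      Consistent (J.strat (J.H v)) π → G.InfWonBy π (J.H v)) ∧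
    (∀ (ρ : ℕ → V) (n : ℕ), ρ 0 = v → IsFinPath G.E ρ n →
      (∀ i < n, J.param (ρ i) = none) → ConsistentFin (J.strat (J.H v)) ρ n →
      ∀ β : Fin 2, J.param (ρ n) = some β → β = J.H v) := by
  refine ⟨fun π h0 hpath hparam hcons => ?_, fun ρ n h0 hpath hparam hcons β hβ => ?_⟩
  · subst h0
    have hjust (i : ℕ) : J.Justified (π i) := Justification.param_eq_none_iff.mp (hparam i)
    have hD : IsInfPath J.D π := fun i =>
      hJ.1.isFinPath_D_of_consistentFin (n := i + 1) (fun j _ => hpath j) (fun j _ => hjust j)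
        (fun j _ => hcons j) i (Nat.lt_succ_self i)
    exact hJ.2 π hD
  · subst h0
    rw [Justification.eq_H_of_param_eq_some hβ]
    exact hJ.1.H_eq_of_consistentFin hpath
      (fun i hi => Justification.param_eq_none_iff.mp (hparam i hi)) hcons n le_rfl

/-- for a winning justification `J` and node `v`, every
(infinite or finite) play of `PG_{P_J}` starting in `v` and consistent with
`σ_{J, H v}` is won by `H v`; hence `H` is the winning function of
`PG_{P_J}` and `σ_{J, H v}` is a winning strategy for `v`. -/
theorem stmt_5 {V : Type*} [Fintype V] {G : ParityGame V}
    (J : Justification G) (hJ : J.Winning) (v : V) :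
    (∀ π : ℕ → V, π 0 = v → IsInfPath G.E π → (∀ i, J.param (π i) = none) →
      Consistent (J.strat (J.H v)) π → G.InfWonBy π (J.H v)) ∧
    (∀ (ρ : ℕ → V) (n : ℕ), ρ 0 = v → IsFinPath G.E ρ n →
      (∀ i < n, J.param (ρ i) = none) → ConsistentFin (J.strat (J.H v)) ρ n →
      ∀ β : Fin 2, J.param (ρ n) = some β → β = J.H v) :=
  stmt_5_general J hJ v

end ParityGame

end
end

section
/- Let J = (V, D, H) be a weakly winning justification, v a node with H(v) = ᾱ that has no incoming edges in D, and dj a direct justification that wins v for α under H. Then J' = J[v : dj, α] is weakly winning and no cycle in J' contains an edge of dj. -/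
attribute [local instance] Classical.propDecidable

open Fin.NatCast

noncomputable section

namespace ParityGame

variable {V : Type*}

variable {G : ParityGame V}

/-! The edges of `dj` all leave `v`, and `v` has no incoming `D`-edges, so in `J[v : dj, α]`
the only edge into `v` could be a self-loop `(v, v) ∈ dj`. Such a loop would force `H v = α`,
contradicting `H v = 1 - α`; hence no cycle passes through `v`, let alone uses an edge of `dj`. -/

theorem IsCycle.exists_pred {R : V → V → Prop} {ρ : ℕ → V} {n : ℕ} (hc : IsCycle R ρ n)
    {i : ℕ} (hi : i < n) : ∃ k < n, R (ρ k) (ρ i) := by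
  obtain ⟨hn, hpath, hclosed⟩ := hc
  rcases Nat.eq_zero_or_pos i with rfl | hpos
  · refine ⟨n - 1, by omega, ?_⟩
    simpa [Nat.sub_add_cancel hn, hclosed] using hpath (n - 1) (by omega)
  · refine ⟨i - 1, by omega, ?_⟩
    simpa [Nat.sub_add_cancel hpos] using hpath (i - 1) (by omega)

theorem IsDJ.fst_eq {v : V} {α : Fin 2} {dj : Set (V × V)} (h : G.IsDJ v α dj) :
    ∀ p ∈ dj, p.1 = v := by
  intro p hp
  by_cases ho : G.owner v = α
  · obtain ⟨w, -, rfl⟩ := h.1 ho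
    rw [hp]
  · rw [h.2 ho] at hp
    exact hp.1

namespace Justification

variable (J : Justification G) {u v : V} {α : Fin 2} {dj : Set (V × V)}

@[simp]
theorem update_H_self : (J.update v dj α).H v = α := if_pos rfl

@[simp]
theorem update_H_of_ne (h : u ≠ v) : (J.update v dj α).H u = J.H u := if_neg h

theorem outEdges_update_self (hdj : ∀ p ∈ dj, p.1 = v) :
    (J.update v dj α).outEdges v = dj := by
  ext ⟨x, y⟩
  simp only [outEdges, update, Set.mem_ofPred_eq]
  exact ⟨fun ⟨hx, hy⟩ => hx ▸ hy, fun hp => ⟨hdj _ hp, hdj _ hp ▸ hp⟩⟩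

theorem outEdges_update_of_ne (h : u ≠ v) :
    (J.update v dj α).outEdges u = J.outEdges u := by
  simp [outEdges, update, h]

theorem justified_of_justified_update (h : u ≠ v)
    (hu : (J.update v dj α).Justified u) : J.Justified u := by
  simpa [Justified, update, h] using hu

theorem update_D_to_self (hnoin : ∀ w, ¬ J.D w v)
    (h : (J.update v dj α).D u v) : u = v ∧ (v, v) ∈ dj := by
  by_cases huv : u = v
  · subst huv
    simpa [update] using h
  · simp only [update, if_neg huv] at h
    exact absurd h (hnoin u)

theorem WeaklyWinning.update {J : Justification G} (hJ : J.WeaklyWinning)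
    (hnoin : ∀ w, ¬ J.D w v) (hwin : G.WinsDJ J.H v α dj) :
    (J.update v dj α).WeaklyWinning := by
  intro u hu
  by_cases huv : u = v
  · subst huv
    rw [update_H_self, outEdges_update_self J hwin.1.fst_eq]
    refine ⟨hwin.1, fun p hp => ?_⟩
    by_cases hp2 : p.2 = u
    · rw [hp2, update_H_self]
    · rw [update_H_of_ne J hp2]
      exact hwin.2 p hp
  · obtain ⟨hdj, hH⟩ := hJ u (J.justified_of_justified_update huv hu)
    rw [update_H_of_ne J huv, outEdges_update_of_ne J huv]
    refine ⟨hdj, fun p hp => ?_⟩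
    have hp2 : p.2 ≠ v := fun h => hnoin u (h ▸ hp.2)
    rw [update_H_of_ne J hp2]
    exact hH p hp

theorem ne_of_isCycle_update (hnoin : ∀ w, ¬ J.D w v) (hloop : (v, v) ∉ dj)
    {ρ : ℕ → V} {n : ℕ} (hc : IsCycle (J.update v dj α).D ρ n) :
    ∀ i < n, ρ i ≠ v := by
  intro i hi hρi
  obtain ⟨k, -, hk⟩ := hc.exists_pred hi
  rw [hρi] at hk
  exact hloop (J.update_D_to_self hnoin hk).2

end Justification

theorem stmt_6_general {V : Type*} {G : ParityGame V}
    (J : Justification G) (hJ : J.WeaklyWinning) (v : V) (α : Fin 2)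
    (dj : Set (V × V)) (hHv : J.H v = 1 - α) (hnoin : ∀ w, ¬ J.D w v)
    (hwin : G.WinsDJ J.H v α dj) :
    (J.update v dj α).WeaklyWinning ∧
    ∀ (ρ : ℕ → V) (n : ℕ), IsCycle (J.update v dj α).D ρ n →
      ∀ i < n, (ρ i, ρ (i + 1)) ∉ dj := by
  have hloop : (v, v) ∉ dj := fun h => by
    have hne : (1 - α : Fin 2) ≠ α := by fin_cases α <;> decide
    exact hne (hHv ▸ hwin.2 _ h)
  refine ⟨hJ.update hnoin hwin, fun ρ n hc i hi hin => ?_⟩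
  exact J.ne_of_isCycle_update hnoin hloop hc i hi (hwin.1.fst_eq _ hin)

/-- if `J` is weakly winning, `H v = ᾱ`, `v` has no incoming
edges in `D`, and `dj` wins `v` for `α` under `H`, then `J[v : dj, α]` is
weakly winning and no cycle of `J[v : dj, α]` contains an edge of `dj`. -/
theorem stmt_6 {V : Type*} [Fintype V] {G : ParityGame V}
    (J : Justification G) (hJ : J.WeaklyWinning) (v : V) (α : Fin 2)
    (dj : Set (V × V)) (hHv : J.H v = 1 - α) (hnoin : ∀ w, ¬ J.D w v)
    (hwin : G.WinsDJ J.H v α dj) :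
    (J.update v dj α).WeaklyWinning ∧
    ∀ (ρ : ℕ → V) (n : ℕ), IsCycle (J.update v dj α).D ρ n →
      ∀ i < n, (ρ i, ρ (i + 1)) ∉ dj :=
  stmt_6_general J hJ v α dj hHv hnoin hwin

end ParityGame

end
end

section
/- Let J = (V, D, H) be a winning justification for a parity game PG in which every node is justified. Then H is the winning function of PG: for every node v, player H(v) wins v in PG, and σ_{J,H(v)} is a winning strategy for v. -/
attribute [local instance] Classical.propDecidable

open Fin.NatCast

noncomputable section

namespace ParityGame

variable {V : Type*}

variable {G : ParityGame V}

namespace Justification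

/-! A play consistent with `σ_{J, H v}` never leaves `D`: at a node owned by `H v` the strategy
follows the `D`-edge, at any other node `D` contains every outgoing edge, and `D`-edges keep the
hypothesis `H v`. Hence the play is an infinite path in `D`, which is won by `H v` since `J` is
winning. -/

variable {J : Justification G} {u w : V}

theorem WeaklyWinning.H_eq_of_D (hJ : J.WeaklyWinning) (h : J.D u w) : J.H w = J.H u :=
  (hJ u ⟨w, h⟩).2 (u, w) ⟨rfl, h⟩

theorem WeaklyWinning.D_of_E_of_strat_eq (hJ : J.WeaklyWinning) (hu : J.Justified u)
    (hE : G.E u w) (hσ : ∀ x, J.strat (J.H u) u x → w = x) : J.D u w := by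
  by_cases ho : G.owner u = J.H u
  · obtain ⟨x, hx⟩ := hu
    rwa [hσ x ⟨hx, ho, rfl⟩]
  · have hout : J.outEdges u = {p | p.1 = u ∧ G.E u p.2} := (hJ u hu).1.2 ho
    have hmem : (u, w) ∈ J.outEdges u := by rw [hout]; exact ⟨rfl, hE⟩
    exact hmem.2

theorem WeaklyWinning.isInfPath_D_of_consistent (hJ : J.WeaklyWinning) {π : ℕ → V}
    (hjust : ∀ i, J.Justified (π i)) (hπ : IsInfPath G.E π)
    (hc : Consistent (J.strat (J.H (π 0))) π) : IsInfPath J.D π := by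
  have step : ∀ i, J.H (π i) = J.H (π 0) → J.D (π i) (π (i + 1)) := fun i hi =>
    hJ.D_of_E_of_strat_eq (hjust i) (hπ i) fun x hx => hc i x (hi ▸ hx)
  have hH : ∀ i, J.H (π i) = J.H (π 0) := by
    intro i
    induction i with
    | zero => rfl
    | succ i ih => rw [hJ.H_eq_of_D (step i ih), ih]
  exact fun i => step i (hH i)

end Justification

theorem stmt_17_general {V : Type*} {G : ParityGame V}
    (J : Justification G) (hJ : J.Winning) (hall : ∀ v, J.Justified v) :
    ∀ (v : V) (π : ℕ → V), π 0 = v → IsInfPath G.E π →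
      Consistent (J.strat (J.H v)) π → G.InfWonBy π (J.H v) := by
  rintro _ π rfl hπ hc
  exact hJ.2 π (hJ.1.isInfPath_D_of_consistent (fun i => hall (π i)) hπ hc)

/-- if `J` is a winning justification in which every node is
justified, then `H` is the winning function of the parity game `G`: for
every node `v`, every play of `G` starting in `v` and consistent with
`σ_{J, H v}` is won by `H v`, i.e. `σ_{J, H v}` is a winning strategy for
`v` for player `H v`. -/
theorem stmt_17 {V : Type*} [Fintype V] {G : ParityGame V}
    (J : Justification G) (hJ : J.Winning) (hall : ∀ v, J.Justified v) :
    ∀ (v : V) (π : ℕ → V), π 0 = v → IsInfPath G.E π →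
      Consistent (J.strat (J.H v)) π → G.InfWonBy π (J.H v) :=
  stmt_17_general J hJ hall

end ParityGame

end
end
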